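/- Let A be an essentially hyperbolic bounded operator on a complex Banach space and let λ be a point of σ(A) on the imaginary axis. Then λ is an isolated eigenvalue of A and A - λ is a Fredholm operator of index 0. -/

import Mathlib

open Module

/-- A bounded operator between Banach spaces is Fredholm if its range is closed and its
kernel and cokernel are finite-dimensional. -/
def IsFredholm {E F : Type*} [NormedAddCommGroup E] [NormedSpace ℂ E]
    [NormedAddCommGroup F] [NormedSpace ℂ F] (T : E →L[ℂ] F) : Prop :=
  IsClosed (LinearMap.range (T : E →ₗ[ℂ] F) : Set F) ∧ FiniteDimensional ℂ (LinearMap.ker (T : E →ₗ[ℂ] F)) ∧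
    FiniteDimensional ℂ (F ⧸ LinearMap.range (T : E →ₗ[ℂ] F))

/-- The Fredholm index of a bounded operator. -/
noncomputable def fredIndex {E F : Type*} [NormedAddCommGroup E] [NormedSpace ℂ E]
    [NormedAddCommGroup F] [NormedSpace ℂ F] (T : E →L[ℂ] F) : ℤ :=
  (finrank ℂ (LinearMap.ker (T : E →ₗ[ℂ] F)) : ℤ) - finrank ℂ (F ⧸ LinearMap.range (T : E →ₗ[ℂ] F))

/-- The essential spectrum of a bounded operator. -/
def essSpectrum {E : Type*} [NormedAddCommGroup E] [NormedSpace ℂ E]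
    (A : E →L[ℂ] E) : Set ℂ :=
  {z | ¬ IsFredholm (A - algebraMap ℂ (E →L[ℂ] E) z)}

/-!
Near a point `z₀` where `T z₀ = A - z₀` has finite-dimensional kernel and cokernel, border `T z`
to the operator `(x, v) ↦ (T z x + J v, P x)` on `E × V → E × W` (a Grushin problem), with
`W = ker (T z₀)`, `P` a continuous projection onto it and `V` a complement of `range (T z₀)`.
It is invertible at `z₀`, hence near `z₀`, with inverse analytic in `z`, and the corner
`G z : W → V` of the inverse (a Schur complement) has the same kernel and cokernel as `T z`.
So the index of `T z` is `dim W - dim V` near `z₀`, and if it vanishes, `T z` fails to be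
invertible exactly where the analytic function `det (G z)` vanishes: on a whole neighbourhood
of `z₀`, or only at isolated points.

Along the imaginary axis the index is therefore locally constant; the axis is connected and
meets the resolvent set because the spectrum is bounded, so the index vanishes on it. A point
of the axis that accumulates the spectrum then lies in its interior, so the axis meets the
interior of the spectrum in a relatively clopen set, which must be empty. Hence `λ` is
isolated, and `A - λ`, of index zero but not invertible, has a nontrivial kernel.
-/

open Function Filter Topology
open scoped ContDiff

namespace LinearEquiv

section Ring

variable {R E F V W : Type*} [Ring R] [AddCommGroup E] [Module R E] [AddCommGroup F] [Module R F]
  [AddCommGroup V] [Module R V] [AddCommGroup W] [Module R W]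

def schurComplement (e : (E × V) ≃ₗ[R] (F × W)) : W →ₗ[R] V :=
  LinearMap.snd R E V ∘ₗ e.symm.toLinearMap ∘ₗ LinearMap.inr R F W

variable {T : E →ₗ[R] F} {J : V →ₗ[R] F} {P : E →ₗ[R] W} {e : (E × V) ≃ₗ[R] (F × W)}

lemma schurComplement_apply (w : W) : e.schurComplement w = (e.symm (0, w)).2 := rfl

section
variable (he : ∀ x v, e (x, v) = (T x + J v, P x))
include he

lemma symm_apply_bordered (x : E) (v : V) : e.symm (T x + J v, P x) = (x, v) := by
  rw [e.symm_apply_eq, he]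

lemma bordered_symm_apply (q : F × W) :
    T (e.symm q).1 + J (e.symm q).2 = q.1 ∧ P (e.symm q).1 = q.2 := by
  have h := e.apply_symm_apply q
  rw [← Prod.mk.eta (p := e.symm q), he] at h
  exact ⟨congrArg Prod.fst h, congrArg Prod.snd h⟩

lemma symm_apply_zero_of_mem_ker {x : E} (hx : T x = 0) : e.symm (0, P x) = (x, 0) := by
  simpa [hx] using symm_apply_bordered he x 0

def kerEquivKerSchurComplement : LinearMap.ker T ≃ₗ[R] LinearMap.ker e.schurComplement :=
  LinearEquiv.ofLinearMap
    ((P ∘ₗ (LinearMap.ker T).subtype).codRestrict _ fun x => by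
      simp [schurComplement_apply, symm_apply_zero_of_mem_ker he x.2])
    ((LinearMap.fst R E V ∘ₗ e.symm.toLinearMap ∘ₗ LinearMap.inr R F W ∘ₗ
        (LinearMap.ker e.schurComplement).subtype).codRestrict _ fun w => by
      have hw : (e.symm (0, (w : W))).2 = 0 := w.2
      simpa [hw] using (bordered_symm_apply he (0, w)).1)
    (LinearMap.ext fun w => Subtype.ext (bordered_symm_apply he (0, w)).2)
    (LinearMap.ext fun x => Subtype.ext (congrArg Prod.fst (symm_apply_zero_of_mem_ker he x.2)))

def cokerEquivCokerSchurComplement :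
    (F ⧸ LinearMap.range T) ≃ₗ[R] (V ⧸ LinearMap.range e.schurComplement) :=
  LinearEquiv.ofLinearMap
    ((LinearMap.range T).mapQ _ (LinearMap.snd R E V ∘ₗ e.symm.toLinearMap ∘ₗ LinearMap.inl R F W)
      (by
        rintro _ ⟨x, rfl⟩
        refine ⟨-P x, ?_⟩
        have h := congrArg Prod.snd (symm_apply_bordered he x 0)
        rw [show ((T x + J 0, P x) : F × W) = (T x, 0) + (0, P x) by simp, map_add] at h
        simp only [map_neg, schurComplement_apply, LinearMap.comp_apply, LinearMap.inl_apply,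
          LinearMap.snd_apply, coe_coe]
        exact neg_eq_of_add_eq_zero_left (by simpa using h)))
    ((LinearMap.range e.schurComplement).mapQ _ J (by
      rintro _ ⟨w, rfl⟩
      refine ⟨-(e.symm (0, w)).1, ?_⟩
      have h := (bordered_symm_apply he (0, w)).1
      rw [map_neg, neg_eq_iff_add_eq_zero, schurComplement_apply]
      exact h))
    (by
      ext v
      have h := symm_apply_bordered he 0 v
      simp only [map_zero, zero_add] at h
      simp [h])
    (by
      ext y
      have h := (bordered_symm_apply he (y, 0)).1
      simp only [LinearMap.comp_apply, Submodule.mkQ_apply, Submodule.mapQ_apply,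
        LinearMap.id_apply]
      refine (Submodule.Quotient.eq _).2 ⟨-(e.symm (y, 0)).1, ?_⟩
      simp only [map_neg, neg_eq_iff_add_eq_zero]
      simpa [sub_eq_zero, add_sub, add_comm] using h)

lemma bijective_iff_bijective_schurComplement : Bijective T ↔ Bijective e.schurComplement := by
  simp only [Bijective, ← LinearMap.ker_eq_bot, ← LinearMap.range_eq_top,
    ← Submodule.subsingleton_iff_eq_bot, ← Submodule.Quotient.subsingleton_iff,
    (kerEquivKerSchurComplement he).toEquiv.subsingleton_congr,
    (cokerEquivCokerSchurComplement he).toEquiv.subsingleton_congr]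

end

end Ring

section DivisionRing

variable {K E F V W : Type*} [DivisionRing K] [AddCommGroup E] [Module K E] [AddCommGroup F]
  [Module K F] [AddCommGroup V] [Module K V] [AddCommGroup W] [Module K W] [FiniteDimensional K V]
  [FiniteDimensional K W] {T : E →ₗ[K] F} {J : V →ₗ[K] F} {P : E →ₗ[K] W}
  {e : (E × V) ≃ₗ[K] (F × W)}

lemma finrank_ker_sub_finrank_coker (he : ∀ x v, e (x, v) = (T x + J v, P x)) :
    (finrank K (LinearMap.ker T) : ℤ) - finrank K (F ⧸ LinearMap.range T) =
      finrank K W - finrank K V := by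
  rw [(kerEquivKerSchurComplement he).finrank_eq, (cokerEquivCokerSchurComplement he).finrank_eq]
  have hW := LinearMap.finrank_range_add_finrank_ker e.schurComplement
  have hV := Submodule.finrank_quotient_add_finrank (LinearMap.range e.schurComplement)
  omega

end DivisionRing

end LinearEquiv

namespace ContinuousLinearMap

variable {E F V W : Type*} [NormedAddCommGroup E] [NormedSpace ℂ E] [NormedAddCommGroup F]
  [NormedSpace ℂ F] [NormedAddCommGroup V] [NormedSpace ℂ V] [NormedAddCommGroup W]
  [NormedSpace ℂ W]

def bordered (T : E →L[ℂ] F) (J : V →L[ℂ] F) (P : E →L[ℂ] W) : (E × V) →L[ℂ] (F × W) :=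
  (T.coprod J).prod (P.comp (fst ℂ E V))

@[simp]
lemma bordered_apply (T : E →L[ℂ] F) (J : V →L[ℂ] F) (P : E →L[ℂ] W) (x : E) (v : V) :
    bordered T J P (x, v) = (T x + J v, P x) := rfl

noncomputable def borderedSchurComplement (T : E →L[ℂ] F) (J : V →L[ℂ] F) (P : E →L[ℂ] W) :
    W →L[ℂ] V :=
  snd ℂ E V ∘L (bordered T J P).inverse ∘L inr ℂ F W

theorem exists_isInvertible_bordered [CompleteSpace E] [CompleteSpace F] (T : E →L[ℂ] F)
    [FiniteDimensional ℂ (LinearMap.ker (T : E →ₗ[ℂ] F))]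
    [FiniteDimensional ℂ (F ⧸ LinearMap.range (T : E →ₗ[ℂ] F))] :
    ∃ (C : Submodule ℂ F) (P : E →L[ℂ] LinearMap.ker (T : E →ₗ[ℂ] F)),
      FiniteDimensional ℂ C ∧ (bordered T C.subtypeL P).IsInvertible := by
  obtain ⟨P, hP⟩ :=
    Submodule.ClosedComplemented.of_finiteDimensional (LinearMap.ker (T : E →ₗ[ℂ] F))
  obtain ⟨C, hC⟩ := Submodule.exists_isCompl (LinearMap.range (T : E →ₗ[ℂ] F))
  have : FiniteDimensional ℂ C := (Submodule.quotientEquivOfIsCompl _ _ hC).finiteDimensional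
  have : CompleteSpace C := FiniteDimensional.complete ℂ C
  have : CompleteSpace (LinearMap.ker (T : E →ₗ[ℂ] F)) := FiniteDimensional.complete ℂ _
  have hinj : Injective (bordered T C.subtypeL P) := by
    refine (injective_iff_map_eq_zero _).2 fun ⟨x, c⟩ h => ?_
    simp only [bordered_apply, Submodule.subtypeL_apply, Prod.mk_eq_zero] at h
    obtain rfl : c = 0 := Subtype.ext <| Submodule.disjoint_def.1 hC.disjoint c
      ⟨-x, by simp [eq_neg_of_add_eq_zero_right h.1]⟩ c.2
    have hx : T x = 0 := by simpa using h.1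
    obtain rfl : x = 0 := by simpa [h.2] using (congrArg Subtype.val (hP ⟨x, hx⟩)).symm
    rfl
  have hsurj : Surjective (bordered T C.subtypeL P) := by
    rintro ⟨y, k⟩
    obtain ⟨_, ⟨x, rfl⟩, c, hc, hy⟩ :=
      Submodule.mem_sup.1 (hC.sup_eq_top ▸ Submodule.mem_top (x := y))
    refine ⟨(x - P x + k, ⟨c, hc⟩), ?_⟩
    have hk : T (k : E) = 0 := k.2
    have hPx : T (P x : E) = 0 := (P x).2
    simpa [hk, hPx, hP] using hy
  exact ⟨C, P, inferInstance, .ofBijective _ (LinearMap.ker_eq_bot.2 hinj)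
    (LinearMap.range_eq_top.2 hsurj), ContinuousLinearEquiv.coe_ofBijective _ _ _⟩

variable {J : V →L[ℂ] F} {P : E →L[ℂ] W}

lemma contDiff_bordered {n : WithTop ℕ∞} : ContDiff ℂ n fun T : E →L[ℂ] F => bordered T J P := by
  have h : (fun T : E →L[ℂ] F => bordered T J P) =
      fun T => (inl ℂ F W ∘L T) ∘L fst ℂ E V + bordered 0 J P := by
    funext T
    refine ContinuousLinearMap.ext fun ⟨x, v⟩ => ?_
    simp
  rw [h]
  exact ((contDiff_const.clm_comp contDiff_id).clm_comp contDiff_const).add contDiff_const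

lemma analyticAt_borderedSchurComplement [CompleteSpace E] [CompleteSpace F] [CompleteSpace V]
    {T : ℂ → E →L[ℂ] F} {z₀ : ℂ} (hT : AnalyticAt ℂ T z₀)
    (hB : (bordered (T z₀) J P).IsInvertible) :
    AnalyticAt ℂ (fun z => borderedSchurComplement (T z) J P) z₀ := by
  obtain ⟨e, he⟩ := hB
  have hinv : ContDiffAt ℂ ω (fun z => (bordered (T z) J P).inverse) z₀ :=
    (he ▸ contDiffAt_map_inverse e).comp z₀
      ((contDiff_bordered (J := J) (P := P)).contDiffAt.comp z₀ hT.contDiffAt)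
  exact (contDiffAt_const.clm_comp (hinv.clm_comp contDiffAt_const)).analyticAt

lemma eventually_isInvertible_bordered [CompleteSpace E] [CompleteSpace V]
    {T : ℂ → E →L[ℂ] F} {z₀ : ℂ} (hT : ContinuousAt T z₀)
    (hB : (bordered (T z₀) J P).IsInvertible) :
    ∀ᶠ z in 𝓝 z₀, (bordered (T z) J P).IsInvertible :=
  ((contDiff_bordered (J := J) (P := P) (n := 0)).continuous.continuousAt.comp hT).eventually_mem
    (ContinuousLinearEquiv.isOpen.mem_nhds hB)

variable {T : E →L[ℂ] F}

lemma fredIndex_eq_of_isInvertible_bordered [FiniteDimensional ℂ V] [FiniteDimensional ℂ W]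
    (hB : (bordered T J P).IsInvertible) : fredIndex T = finrank ℂ W - finrank ℂ V := by
  obtain ⟨e, he⟩ := hB
  exact LinearEquiv.finrank_ker_sub_finrank_coker (e := e.toLinearEquiv) (J := (J : V →ₗ[ℂ] F))
    (P := (P : E →ₗ[ℂ] W)) fun x v => DFunLike.congr_fun he (x, v)

lemma bijective_iff_of_isInvertible_bordered (hB : (bordered T J P).IsInvertible) :
    Bijective T ↔ Bijective (borderedSchurComplement T J P) := by
  obtain ⟨e, he⟩ := hB
  have hG : borderedSchurComplement T J P = e.toLinearEquiv.schurComplement := by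
    rw [borderedSchurComplement, ← he, inverse_equiv]; rfl
  exact (LinearEquiv.bijective_iff_bijective_schurComplement (e := e.toLinearEquiv)
    (J := (J : V →ₗ[ℂ] F)) (P := (P : E →ₗ[ℂ] W)) fun x v => DFunLike.congr_fun he (x, v)).trans
    (by rw [← hG]; rfl)

end ContinuousLinearMap

lemma AnalyticAt.det {𝕜 X W : Type*} [NontriviallyNormedField 𝕜] [CompleteSpace 𝕜]
    [NormedAddCommGroup X] [NormedSpace 𝕜 X] [NormedAddCommGroup W] [NormedSpace 𝕜 W]
    [FiniteDimensional 𝕜 W] {f : X → W →L[𝕜] W} {x : X} (hf : AnalyticAt 𝕜 f x) :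
    AnalyticAt 𝕜 (fun y => (f y).det) x := by
  let b := Module.finBasis 𝕜 W
  have h : (fun y => (f y).det) = fun y => ∑ σ : Equiv.Perm (Fin (finrank 𝕜 W)),
      ((Equiv.Perm.sign σ : ℤ) : 𝕜) * ∏ i, b.coord (σ i) (f y (b i)) := by
    funext y
    rw [ContinuousLinearMap.det, ← LinearMap.det_toMatrix b, Matrix.det_apply']
    simp [LinearMap.toMatrix_apply]
  rw [h]
  refine Finset.analyticAt_fun_sum _ fun σ _ =>
    analyticAt_const.mul (Finset.analyticAt_fun_prod _ fun i _ => ?_)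
  exact ((LinearMap.toContinuousLinearMap (b.coord (σ i))).comp
    (ContinuousLinearMap.apply 𝕜 W (b i))).analyticAt _ |>.comp hf

lemma ContinuousLinearMap.bijective_iff_det_ne_zero {𝕜 W : Type*} [NontriviallyNormedField 𝕜]
    [NormedAddCommGroup W] [NormedSpace 𝕜 W] [FiniteDimensional 𝕜 W] (f : W →L[𝕜] W) :
    Bijective f ↔ f.det ≠ 0 := by
  rw [ContinuousLinearMap.det, ← isUnit_iff_ne_zero, ← LinearMap.isUnit_iff_isUnit_det,
    Module.End.isUnit_iff]
  rfl

section AnalyticFamily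

open ContinuousLinearMap

variable {E F : Type*} [NormedAddCommGroup E] [NormedSpace ℂ E] [CompleteSpace E]
  [NormedAddCommGroup F] [NormedSpace ℂ F] [CompleteSpace F] {T : ℂ → E →L[ℂ] F} {z₀ : ℂ}
  [FiniteDimensional ℂ (LinearMap.ker (T z₀ : E →ₗ[ℂ] F))]
  [FiniteDimensional ℂ (F ⧸ LinearMap.range (T z₀ : E →ₗ[ℂ] F))]

theorem eventually_fredIndex_eq (hT : ContinuousAt T z₀) :
    ∀ᶠ z in 𝓝 z₀, fredIndex (T z) = fredIndex (T z₀) := by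
  obtain ⟨C, P, hC, hB⟩ := exists_isInvertible_bordered (T z₀)
  have : CompleteSpace C := FiniteDimensional.complete ℂ C
  filter_upwards [eventually_isInvertible_bordered hT hB] with z hz
  rw [fredIndex_eq_of_isInvertible_bordered hz, fredIndex_eq_of_isInvertible_bordered hB]

theorem eventually_not_bijective_or_eventually_bijective (hT : AnalyticAt ℂ T z₀)
    (h0 : fredIndex (T z₀) = 0) :
    (∀ᶠ z in 𝓝 z₀, ¬ Bijective (T z)) ∨ ∀ᶠ z in 𝓝[≠] z₀, Bijective (T z) := by
  obtain ⟨C, P, hC, hB⟩ := exists_isInvertible_bordered (T z₀)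
  have : CompleteSpace C := FiniteDimensional.complete ℂ C
  have hdim : finrank ℂ C = finrank ℂ (LinearMap.ker (T z₀ : E →ₗ[ℂ] F)) := by
    have := fredIndex_eq_of_isInvertible_bordered hB
    omega
  let φ : C ≃L[ℂ] LinearMap.ker (T z₀ : E →ₗ[ℂ] F) :=
    (LinearEquiv.ofFinrankEq _ _ hdim).toContinuousLinearEquiv
  set d : ℂ → ℂ := fun z => ((φ : C →L[ℂ] _) ∘L borderedSchurComplement (T z) C.subtypeL P).det
  have hd : AnalyticAt ℂ d z₀ :=
    (((compL ℂ _ _ _ (φ : C →L[ℂ] _)).analyticAt _).comp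
      (analyticAt_borderedSchurComplement hT hB)).det
  have hbij : ∀ᶠ z in 𝓝 z₀, Bijective (T z) ↔ d z ≠ 0 := by
    filter_upwards [eventually_isInvertible_bordered hT.continuousAt hB] with z hz
    rw [bijective_iff_of_isInvertible_bordered hz, ← bijective_iff_det_ne_zero, coe_comp,
      ContinuousLinearEquiv.coe_coe, EquivLike.comp_bijective]
  rcases hd.eventually_eq_zero_or_eventually_ne_zero with h | h
  · left
    filter_upwards [hbij, h] with z h1 h2
    rwa [h1, not_not]
  · right
    filter_upwards [nhdsWithin_le_nhds hbij, h] with z h1 h2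
    exact h1.2 h2

end AnalyticFamily

lemma exists_isOpen_inter_eq_singleton_of_notMem_derivedSet {X : Type*} [TopologicalSpace X]
    {s : Set X} {x : X} (hx : x ∈ s) (h : x ∉ derivedSet s) : ∃ U, IsOpen U ∧ U ∩ s = {x} := by
  rw [mem_derivedSet, accPt_iff_frequently, not_frequently] at h
  obtain ⟨U, hU, hUo, hxU⟩ := eventually_nhds_iff.1 h
  refine ⟨U, hUo, Set.Subset.antisymm (fun y hy => ?_) (Set.singleton_subset_iff.2 ⟨hxU, hx⟩)⟩
  by_contra hyx
  exact hU y hy.1 ⟨hyx, hy.2⟩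

lemma exists_re_eq_zero_notMem_spectrum {B : Type*} [NormedRing B] [NormedAlgebra ℂ B]
    [CompleteSpace B] (a : B) : ∃ z : ℂ, z.re = 0 ∧ z ∉ spectrum ℂ a := by
  set r := ‖a‖ * ‖(1 : B)‖ + 1
  refine ⟨(r : ℂ) * Complex.I, by simp, fun h => ?_⟩
  have := spectrum.subset_closedBall_norm_mul a h
  rw [Metric.mem_closedBall, dist_zero_right, norm_mul, Complex.norm_I, mul_one, Complex.norm_real,
    Real.norm_eq_abs, abs_of_pos (by positivity)] at this
  linarith

lemma fredIndex_eq_zero_of_bijective {E F : Type*} [NormedAddCommGroup E] [NormedSpace ℂ E]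
    [NormedAddCommGroup F] [NormedSpace ℂ F] {T : E →L[ℂ] F} (h : Bijective T) :
    fredIndex T = 0 := by
  have hker : LinearMap.ker (T : E →ₗ[ℂ] F) = ⊥ := LinearMap.ker_eq_bot.2 h.1
  have : Subsingleton (F ⧸ LinearMap.range (T : E →ₗ[ℂ] F)) :=
    Submodule.Quotient.subsingleton_iff.2 (LinearMap.range_eq_top.2 h.2)
  rw [fredIndex, hker, finrank_bot, finrank_zero_of_subsingleton]
  rfl

lemma bijective_of_injective_of_fredIndex_eq_zero {E F : Type*} [NormedAddCommGroup E]
    [NormedSpace ℂ E] [NormedAddCommGroup F] [NormedSpace ℂ F] {T : E →L[ℂ] F}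
    [FiniteDimensional ℂ (F ⧸ LinearMap.range (T : E →ₗ[ℂ] F))] (h0 : fredIndex T = 0)
    (hinj : Injective T) : Bijective T := by
  have hker : LinearMap.ker (T : E →ₗ[ℂ] F) = ⊥ := LinearMap.ker_eq_bot.2 hinj
  have hcoker : finrank ℂ (F ⧸ LinearMap.range (T : E →ₗ[ℂ] F)) = 0 := by
    rw [fredIndex, hker, finrank_bot] at h0
    omega
  refine ⟨hinj, LinearMap.range_eq_top.1 ?_⟩
  exact Submodule.Quotient.subsingleton_iff.1 (finrank_zero_iff.1 hcoker)

section Spectrum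

variable {E : Type*} [NormedAddCommGroup E] [NormedSpace ℂ E] [CompleteSpace E] {A : E →L[ℂ] E}

lemma mem_spectrum_iff_not_bijective {z : ℂ} :
    z ∈ spectrum ℂ A ↔ ¬ Bijective (A - algebraMap ℂ (E →L[ℂ] E) z) := by
  rw [spectrum.mem_iff, ← neg_sub, IsUnit.neg_iff, ContinuousLinearMap.isUnit_iff_bijective]

omit [CompleteSpace E] in
lemma analyticAt_sub_algebraMap (A : E →L[ℂ] E) (z : ℂ) :
    AnalyticAt ℂ (fun z => A - algebraMap ℂ (E →L[ℂ] E) z) z := by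
  simp only [Algebra.algebraMap_eq_smul_one]
  exact analyticAt_const.sub (analyticAt_id.smul analyticAt_const)

lemma exists_eigenvector_of_mem_spectrum {z : ℂ} (hz : z ∈ spectrum ℂ A)
    [FiniteDimensional ℂ
      (E ⧸ LinearMap.range ((A - algebraMap ℂ (E →L[ℂ] E) z : E →L[ℂ] E) : E →ₗ[ℂ] E))]
    (h0 : fredIndex (A - algebraMap ℂ (E →L[ℂ] E) z) = 0) : ∃ v : E, v ≠ 0 ∧ A v = z • v := by
  by_contra! h
  refine mem_spectrum_iff_not_bijective.1 hz (bijective_of_injective_of_fredIndex_eq_zero h0 ?_)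
  refine (injective_iff_map_eq_zero _).2 fun v hv => ?_
  by_contra hv0
  exact h v hv0 (by simpa [sub_eq_zero, Algebra.algebraMap_eq_smul_one] using hv)

lemma mem_interior_spectrum_of_mem_derivedSet {z₀ : ℂ}
    (hF : IsFredholm (A - algebraMap ℂ (E →L[ℂ] E) z₀))
    (h0 : fredIndex (A - algebraMap ℂ (E →L[ℂ] E) z₀) = 0)
    (hz₀ : z₀ ∈ derivedSet (spectrum ℂ A)) : z₀ ∈ interior (spectrum ℂ A) := by
  have := hF.2.1
  have := hF.2.2
  rcases eventually_not_bijective_or_eventually_bijective (analyticAt_sub_algebraMap A z₀) h0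
    with h | h
  · exact mem_interior_iff_mem_nhds.2 (h.mono fun z hz => mem_spectrum_iff_not_bijective.2 hz)
  · rw [mem_derivedSet, accPt_iff_frequently_nhdsNE] at hz₀
    exact absurd hz₀ <| not_frequently.2 <|
      h.mono fun z hz hz' => mem_spectrum_iff_not_bijective.1 hz' hz

variable {S : Set ℂ} (hS : IsPreconnected S)
  (hF : ∀ z ∈ S, IsFredholm (A - algebraMap ℂ (E →L[ℂ] E) z)) {z₁ : ℂ} (hz₁ : z₁ ∈ S)
  (hρ : z₁ ∉ spectrum ℂ A)
include hS hF hz₁ hρ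

theorem fredIndex_eq_zero_of_isPreconnected {z : ℂ} (hz : z ∈ S) :
    fredIndex (A - algebraMap ℂ (E →L[ℂ] E) z) = 0 := by
  have hcont : ContinuousOn (fun z => fredIndex (A - algebraMap ℂ (E →L[ℂ] E) z)) S := by
    intro z hz
    have := (hF z hz).2.1
    have := (hF z hz).2.2
    refine ContinuousAt.continuousWithinAt ?_
    rw [ContinuousAt, nhds_discrete ℤ, tendsto_pure]
    exact eventually_fredIndex_eq (analyticAt_sub_algebraMap A z).continuousAt
  rw [hS.constant hcont hz hz₁]
  exact fredIndex_eq_zero_of_bijective (not_not.1 (mt mem_spectrum_iff_not_bijective.2 hρ))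

theorem notMem_derivedSet_spectrum_of_isPreconnected {z : ℂ} (hz : z ∈ S) :
    z ∉ derivedSet (spectrum ℂ A) := by
  intro hzσ
  have hint : ∀ z ∈ S, z ∈ derivedSet (spectrum ℂ A) → z ∈ interior (spectrum ℂ A) :=
    fun z hz => mem_interior_spectrum_of_mem_derivedSet (hF z hz)
      (fredIndex_eq_zero_of_isPreconnected hS hF hz₁ hρ hz)
  refine hρ (interior_subset (hS.subset_of_closure_inter_subset isOpen_interior
    ⟨z, hz, hint z hz hzσ⟩ ?_ hz₁))
  rintro w ⟨hw, hwS⟩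
  rw [closure_eq_self_union_derivedSet] at hw
  exact hw.elim id fun h => hint w hwS (derivedSet_mono _ _ interior_subset h)

end Spectrum

theorem isolated_eigenvalue_of_essHyperbolic
    {E : Type*} [NormedAddCommGroup E] [NormedSpace ℂ E] [CompleteSpace E]
    (A : E →L[ℂ] E) (hA : essSpectrum A ∩ {z : ℂ | z.re = 0} = ∅)
    (lam : ℂ) (hlam : lam ∈ spectrum ℂ A) (hre : lam.re = 0) :
    (∃ U : Set ℂ, IsOpen U ∧ U ∩ spectrum ℂ A = {lam}) ∧
    (∃ v : E, v ≠ 0 ∧ A v = lam • v) ∧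
    IsFredholm (A - algebraMap ℂ (E →L[ℂ] E) lam) ∧
    fredIndex (A - algebraMap ℂ (E →L[ℂ] E) lam) = 0 := by
  have hS : IsPreconnected {z : ℂ | z.re = 0} :=
    (convex_hyperplane Complex.reLm.isLinear 0).isPreconnected
  have hF : ∀ z ∈ {z : ℂ | z.re = 0}, IsFredholm (A - algebraMap ℂ (E →L[ℂ] E) z) :=
    fun z hz => not_not.1 fun h => hA.subset ⟨h, hz⟩
  obtain ⟨z₁, hz₁, hρ⟩ := exists_re_eq_zero_notMem_spectrum A
  have h0 := fredIndex_eq_zero_of_isPreconnected hS hF hz₁ hρ hre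
  have := (hF lam hre).2.2
  exact ⟨exists_isOpen_inter_eq_singleton_of_notMem_derivedSet hlam
    (notMem_derivedSet_spectrum_of_isPreconnected hS hF hz₁ hρ hre),
    exists_eigenvector_of_mem_spectrum hlam h0, hF lam hre, h0⟩
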